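/- Let 0 < ε ≤ 1/2 and let α > 0 satisfy 2Φ(α) − 1 ≤ ε/(1−ε), where Φ is the standard Gaussian cumulative distribution function (note that d_TV(N(−α,1), N(α,1)) = 2Φ(α) − 1). Then there exist probability measures Q₁, Q₂ on ℝ such that the measure D := (1−ε)·N(−α,1) + ε·Q₁ equals (1−ε)·N(α,1) + ε·Q₂. Consequently, for every n ≥ 1 and every measurable estimator f : ℝⁿ → ℝ, at least one of the following holds: Pr_{X∼D^⊗n}(|f(X) − (−α)| < α) ≤ 1/2, or Pr_{X∼D^⊗n}(|f(X) − α| < α) ≤ 1/2. In particular, no estimator can output the mean of a unit-variance Gaussian to accuracy better than α with probability greater than 1/2 in Huber's ε-contamination model. -/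

import Mathlib

open MeasureTheory ProbabilityTheory
open scoped Classical
open scoped ENNReal

/-- The Gaussian measure `N(μ, I)` on `ℝ^d`, i.e. the product of `d` one-dimensional
Gaussians of variance `1` centered at the coordinates of `μ`. -/
noncomputable def gaussId (d : ℕ) (μ : EuclideanSpace ℝ (Fin d)) :
    Measure (EuclideanSpace ℝ (Fin d)) :=
  (Measure.pi fun i => gaussianReal (μ i) 1).map
    (MeasurableEquiv.toLp 2 (Fin d → ℝ))

/-- The square root of a positive semidefinite matrix (definition of the older Mathlib). -/
noncomputable def Matrix.PosSemidef.sqrt {n : Type*} [Fintype n] [DecidableEq n]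
    {A : Matrix n n ℝ} (hA : A.PosSemidef) : Matrix n n ℝ :=
  hA.1.eigenvectorUnitary.1 * Matrix.diagonal ((↑) ∘ Real.sqrt ∘ hA.1.eigenvalues) *
    (star hA.1.eigenvectorUnitary : Matrix n n ℝ)

/-- The mean-zero Gaussian measure `N(0, Σ)` on `ℝ^d` with covariance matrix `Σ`:
the pushforward of the standard Gaussian under `x ↦ Σ^{1/2} x`. -/
noncomputable def gaussCov (d : ℕ) {S : Matrix (Fin d) (Fin d) ℝ} (hS : S.PosSemidef) :
    Measure (EuclideanSpace ℝ (Fin d)) :=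
  (gaussId d 0).map (fun x =>
    (EuclideanSpace.equiv (Fin d) ℝ).symm (hS.sqrt.mulVec (EuclideanSpace.equiv (Fin d) ℝ x)))

/-- Total variation distance between two measures:
`sup` over measurable sets `A` of `|P(A) − Q(A)|`. -/
noncomputable def tvDist {Ω : Type*} [MeasurableSpace Ω] (P Q : Measure Ω) : ℝ :=
  ⨆ A : {s : Set Ω // MeasurableSet s}, |(P A).toReal - (Q A).toReal|

/-- The cumulative distribution function of the standard one-dimensional Gaussian. -/
noncomputable def stdPhi (x : ℝ) : ℝ := (gaussianReal 0 1 (Set.Iic x)).toReal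

/-- Frobenius norm of a matrix. -/
noncomputable def frob {d : ℕ} (A : Matrix (Fin d) (Fin d) ℝ) : ℝ :=
  Real.sqrt (∑ i, ∑ j, (A i j) ^ 2)

/-- The empirical mean of a finite set of points. -/
noncomputable def empMean {d : ℕ} (G : Finset (EuclideanSpace ℝ (Fin d))) :
    EuclideanSpace ℝ (Fin d) :=
  (G.card : ℝ)⁻¹ • ∑ x ∈ G, x

/-- The expectation of `f` under the uniform distribution over the finite set `G`. -/
noncomputable def empExp {α : Type*} (G : Finset α) (f : α → ℝ) : ℝ :=
  (∑ x ∈ G, f x) / G.card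

/-- The probability of the event `p` under the uniform distribution over `G`. -/
noncomputable def empProb {α : Type*} (G : Finset α) (p : α → Prop) : ℝ :=
  ((G.filter p).card : ℝ) / G.card

/-- `φ(S', G) = |G ∖ G'| / |S'|` where `G' = S' ∩ G`. -/
noncomputable def phiF {α : Type*} (S' G : Finset α) : ℝ := ((G \ S').card : ℝ) / S'.card

/-- `ψ(S', G) = |E'| / |S'|` where `E' = S' ∩ E`. -/
noncomputable def psiF {α : Type*} (S' E : Finset α) : ℝ := ((S' ∩ E).card : ℝ) / S'.card

/-- `Δ(S', G) = ψ(S', G) + φ(S', G) log(1/φ(S', G))`. -/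
noncomputable def deltaF {α : Type*} (S' G E : Finset α) : ℝ :=
  psiF S' E + phiF S' G * Real.log (1 / phiF S' G)

/-- The even degree-2 polynomial `x ↦ xᵀ A x + c`. -/
noncomputable def quadPoly {d : ℕ} (A : Matrix (Fin d) (Fin d) ℝ) (c : ℝ)
    (x : EuclideanSpace ℝ (Fin d)) : ℝ :=
  (∑ i, ∑ j, A i j * x i * x j) + c

/-- The general even polynomial of degree at most 4,
`x ↦ ∑ T i j k l * xᵢxⱼxₖxₗ + xᵀ A x + c`. -/
noncomputable def quartPoly {d : ℕ} (T : Fin d → Fin d → Fin d → Fin d → ℝ)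
    (A : Matrix (Fin d) (Fin d) ℝ) (c : ℝ) (x : EuclideanSpace ℝ (Fin d)) : ℝ :=
  (∑ i, ∑ j, ∑ k, ∑ l, T i j k l * x i * x j * x k * x l)
    + (∑ i, ∑ j, A i j * x i * x j) + c

/-- `(η, δ)`-goodness of a finite set `G` with respect to `N(μ, I)`, with universal
constant `C₀` in the boundedness condition. -/
structure IsGood (d : ℕ) (η δ C₀ : ℝ) (μ : EuclideanSpace ℝ (Fin d))
    (G : Finset (EuclideanSpace ℝ (Fin d))) : Prop where
  bounded : ∀ x ∈ G, ‖x - μ‖ ^ 2 ≤ C₀ * d * Real.log (G.card / δ)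
  affine : ∀ (w : EuclideanSpace ℝ (Fin d)) (b : ℝ),
    |empProb G (fun x => 0 ≤ (∑ i, w i * x i) + b)
      - ((gaussId d μ) {x | 0 ≤ (∑ i, w i * x i) + b}).toReal|
      ≤ η / (d * Real.log (d / (η * δ)))
  meanClose : ‖empMean G - μ‖ ≤ η
  covClose : ∀ v : EuclideanSpace ℝ (Fin d), ‖v‖ = 1 →
    |empExp G (fun x => (∑ i, v i * (x i - empMean G i)) ^ 2) - 1| ≤ η / d
  polyMean : ∀ (A : Matrix (Fin d) (Fin d) ℝ) (c : ℝ),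
    |empExp G (quadPoly A c) - ∫ x, quadPoly A c x ∂(gaussId d μ)|
      ≤ η * Real.sqrt (∫ x, (quadPoly A c x) ^ 2 ∂(gaussId d μ))
  polySq : ∀ (A : Matrix (Fin d) (Fin d) ℝ) (c : ℝ),
    |empExp G (fun x => (quadPoly A c x) ^ 2) - ∫ x, (quadPoly A c x) ^ 2 ∂(gaussId d μ)|
      ≤ η * ∫ x, (quadPoly A c x) ^ 2 ∂(gaussId d μ)
  polyTail : ∀ (A : Matrix (Fin d) (Fin d) ℝ) (c : ℝ),
    empProb G (fun x => 0 ≤ quadPoly A c x)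
      ≤ ((gaussId d μ) {x | 0 ≤ quadPoly A c x}).toReal + η / (d * Real.log (G.card / δ))

/-- `(η, δ)`-goodness of a finite set `G` with respect to `N(0, Σ)`, with universal
constant `C₀` in the boundedness condition. -/
structure IsGoodCov (d : ℕ) (η δ C₀ : ℝ) {S : Matrix (Fin d) (Fin d) ℝ} (hS : S.PosSemidef)
    (G : Finset (EuclideanSpace ℝ (Fin d))) : Prop where
  bounded : ∀ x ∈ G, (∑ i, ∑ j, x i * S⁻¹ i j * x j) ≤ C₀ * d * Real.log (G.card / δ)
  deg2Mean : ∀ (A : Matrix (Fin d) (Fin d) ℝ) (c : ℝ),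
    |empExp G (quadPoly A c) - ∫ x, quadPoly A c x ∂(gaussCov d hS)|
      ≤ η * Real.sqrt (∫ x, (quadPoly A c x) ^ 2 ∂(gaussCov d hS))
  deg2Sq : ∀ (A : Matrix (Fin d) (Fin d) ℝ) (c : ℝ),
    |empExp G (fun x => (quadPoly A c x) ^ 2) - ∫ x, (quadPoly A c x) ^ 2 ∂(gaussCov d hS)|
      ≤ η * ∫ x, (quadPoly A c x) ^ 2 ∂(gaussCov d hS)
  deg2Tail : ∀ (A : Matrix (Fin d) (Fin d) ℝ) (c : ℝ),
    empProb G (fun x => 0 ≤ quadPoly A c x)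
      ≤ ((gaussCov d hS) {x | 0 ≤ quadPoly A c x}).toReal
        + η ^ 2 / (d * Real.log (G.card / δ))
  deg4Mean : ∀ (T : Fin d → Fin d → Fin d → Fin d → ℝ) (A : Matrix (Fin d) (Fin d) ℝ) (c : ℝ),
    |empExp G (quartPoly T A c) - ∫ x, quartPoly T A c x ∂(gaussCov d hS)|
      ≤ η * Real.sqrt (∫ x, (quartPoly T A c x
          - ∫ y, quartPoly T A c y ∂(gaussCov d hS)) ^ 2 ∂(gaussCov d hS))
  deg4Tail : ∀ (T : Fin d → Fin d → Fin d → Fin d → ℝ) (A : Matrix (Fin d) (Fin d) ℝ) (c : ℝ),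
    empProb G (fun x => 0 ≤ quartPoly T A c x)
      ≤ ((gaussCov d hS) {x | 0 ≤ quartPoly T A c x}).toReal
        + η ^ 2 / (2 * Real.log (1 / η) * (d * Real.log (G.card / δ)) ^ 2)

/-- The trace norm (Schatten-1 norm) of a matrix: the trace of `(AᵀA)^{1/2}`. -/
noncomputable def traceNorm {d : ℕ} (A : Matrix (Fin d) (Fin d) ℝ) : ℝ :=
  ((Matrix.posSemidef_conjTranspose_mul_self A).sqrt).trace

section aux

lemma gpdf_le {a b x : ℝ} (h : (x - b) ^ 2 ≤ (x - a) ^ 2) :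
    gaussianPDFReal a 1 x ≤ gaussianPDFReal b 1 x := by
  unfold ProbabilityTheory.gaussianPDFReal
  gcongr

lemma gauss_map_neg : (gaussianReal 0 1).map (fun x => -x) = gaussianReal 0 1 := by
  have h := ProbabilityTheory.gaussianReal_map_const_mul (μ := 0) (v := 1) (-1)
  have h1 : (⟨(-1:ℝ)^2, sq_nonneg _⟩ : NNReal) * 1 = 1 := by ext; norm_num
  simp only [mul_zero, h1] at h
  convert h using 2
  funext x
  ring
  exact h1.symm

lemma gauss_Ici_shift (μ c : ℝ) :
    gaussianReal μ 1 (Set.Ici c) = gaussianReal 0 1 (Set.Ici (c - μ)) := by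
  have h := ProbabilityTheory.gaussianReal_map_add_const (μ := 0) (v := 1) μ
  rw [zero_add] at h
  rw [← h, Measure.map_apply (measurable_id'.add_const μ) measurableSet_Ici]
  congr 1
  ext x
  simp [Set.mem_preimage, sub_le_iff_le_add, le_sub_iff_add_le]

lemma gauss_Ici_symm (c : ℝ) :
    gaussianReal 0 1 (Set.Ici c) = gaussianReal 0 1 (Set.Iic (-c)) := by
  conv_lhs => rw [← gauss_map_neg]
  rw [Measure.map_apply measurable_neg measurableSet_Ici]
  congr 1
  ext x
  simp [le_neg]

lemma meas_h (a b : ℝ) :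
    Measurable fun x => ENNReal.ofReal (max (gaussianPDFReal a 1 x - gaussianPDFReal b 1 x) 0) :=
  (((measurable_gaussianPDFReal a 1).sub (measurable_gaussianPDFReal b 1)).max
    measurable_const).ennreal_ofReal

lemma M_le_ofReal {α : ℝ} (hα : 0 < α) :
    ∫⁻ x, ENNReal.ofReal (max (gaussianPDFReal α 1 x - gaussianPDFReal (-α) 1 x) 0)
      ≤ ENNReal.ofReal (2 * stdPhi α - 1) := by
  have hpt : (fun x => ENNReal.ofReal
        (max (gaussianPDFReal α 1 x - gaussianPDFReal (-α) 1 x) 0))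
      = Set.indicator (Set.Ici 0) (fun x => gaussianPDF α 1 x - gaussianPDF (-α) 1 x) := by
    funext x
    by_cases hx : x ∈ Set.Ici (0:ℝ)
    · rw [Set.indicator_of_mem hx]
      have hle : gaussianPDFReal (-α) 1 x ≤ gaussianPDFReal α 1 x :=
        gpdf_le (by simp only [Set.mem_Ici] at hx; nlinarith)
      rw [max_eq_left (by linarith),
        ENNReal.ofReal_sub _ (gaussianPDFReal_nonneg (-α) 1 x)]
      rfl
    · rw [Set.indicator_of_notMem hx]
      simp only [Set.mem_Ici, not_le] at hx
      have hle : gaussianPDFReal α 1 x ≤ gaussianPDFReal (-α) 1 x :=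
        gpdf_le (by nlinarith)
      rw [max_eq_right (by linarith), ENNReal.ofReal_zero]
  have hrw : (∫⁻ x, ENNReal.ofReal
        (max (gaussianPDFReal α 1 x - gaussianPDFReal (-α) 1 x) 0))
      = ∫⁻ x in Set.Ici 0, (gaussianPDF α 1 x - gaussianPDF (-α) 1 x) := by
    rw [← lintegral_indicator measurableSet_Ici]
    exact lintegral_congr fun x => congrFun hpt x
  rw [hrw]
  have hfin : ∫⁻ x in Set.Ici 0, gaussianPDF (-α) 1 x ≠ ⊤ := by
    refine ne_top_of_le_ne_top ?_ (setLIntegral_le_lintegral _ _)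
    rw [lintegral_gaussianPDF_eq_one (-α) one_ne_zero]
    exact ENNReal.one_ne_top
  have hsub : ∫⁻ x in Set.Ici 0, (gaussianPDF α 1 x - gaussianPDF (-α) 1 x)
      = (∫⁻ x in Set.Ici 0, gaussianPDF α 1 x) - ∫⁻ x in Set.Ici 0, gaussianPDF (-α) 1 x := by
    refine lintegral_sub (measurable_gaussianPDF (-α) 1) hfin ?_
    refine (ae_restrict_iff' measurableSet_Ici).2 (ae_of_all _ fun x hx => ?_)
    exact ENNReal.ofReal_le_ofReal
      (gpdf_le (by simp only [Set.mem_Ici] at hx; nlinarith))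
  rw [hsub]
  have happ : ∀ μ : ℝ, ∫⁻ x in Set.Ici 0, gaussianPDF μ 1 x = gaussianReal μ 1 (Set.Ici 0) := by
    intro μ
    rw [gaussianReal_of_var_ne_zero μ one_ne_zero, withDensity_apply _ measurableSet_Ici]
  rw [happ, happ, gauss_Ici_shift α 0, gauss_Ici_shift (-α) 0, zero_sub, zero_sub, neg_neg,
    gauss_Ici_symm (-α), neg_neg]
  set A := gaussianReal 0 1 (Set.Iic α) with hAdef
  set B := gaussianReal 0 1 (Set.Ici α) with hBdef
  have hAne : A ≠ ⊤ := measure_ne_top _ _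
  have hA : A = ENNReal.ofReal (stdPhi α) := by
    rw [stdPhi, ← hAdef, ENNReal.ofReal_toReal hAne]
  have hAB : 1 ≤ B + A := by
    have : (1:ℝ≥0∞) = gaussianReal 0 1 Set.univ := measure_univ.symm
    rw [this, ← Set.Iic_union_Ici (a := α)]
    exact le_trans (measure_union_le _ _) (by rw [add_comm])
  have hs0 : 0 ≤ stdPhi α := ENNReal.toReal_nonneg
  have hs1 : stdPhi α ≤ 1 := by
    have hle : A ≤ 1 := prob_le_one
    rw [stdPhi, ← hAdef]
    calc A.toReal ≤ (1:ℝ≥0∞).toReal := ENNReal.toReal_mono ENNReal.one_ne_top hle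
    _ = 1 := by simp
  calc A - B ≤ A - (1 - A) := tsub_le_tsub_left (tsub_le_iff_right.2 hAB) A
  _ = ENNReal.ofReal (2 * stdPhi α - 1) := by
      rw [hA, ← ENNReal.ofReal_one, ← ENNReal.ofReal_sub _ hs0,
        ← ENNReal.ofReal_sub _ (by linarith)]
      congr 1
      ring

lemma pt_key (a b x : ℝ) :
    ENNReal.ofReal (gaussianPDFReal b 1 x)
        + ENNReal.ofReal (max (gaussianPDFReal a 1 x - gaussianPDFReal b 1 x) 0)
      = ENNReal.ofReal (gaussianPDFReal a 1 x)
        + ENNReal.ofReal (max (gaussianPDFReal b 1 x - gaussianPDFReal a 1 x) 0) := by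
  rw [← ENNReal.ofReal_add (gaussianPDFReal_nonneg b 1 x) (le_max_right _ _),
    ← ENNReal.ofReal_add (gaussianPDFReal_nonneg a 1 x) (le_max_right _ _)]
  congr 1
  rcases le_total (gaussianPDFReal b 1 x) (gaussianPDFReal a 1 x) with h | h
  · rw [max_eq_left (by linarith), max_eq_right (by linarith)]; ring
  · rw [max_eq_right (by linarith), max_eq_left (by linarith)]; ring

lemma M_symm (a b : ℝ) :
    ∫⁻ x, ENNReal.ofReal (max (gaussianPDFReal a 1 x - gaussianPDFReal b 1 x) 0)
      = ∫⁻ x, ENNReal.ofReal (max (gaussianPDFReal b 1 x - gaussianPDFReal a 1 x) 0) := by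
  have h : ∫⁻ x, (gaussianPDF b 1 x
        + ENNReal.ofReal (max (gaussianPDFReal a 1 x - gaussianPDFReal b 1 x) 0))
      = ∫⁻ x, (gaussianPDF a 1 x
        + ENNReal.ofReal (max (gaussianPDFReal b 1 x - gaussianPDFReal a 1 x) 0)) := by
    congr 1
    funext x
    exact pt_key a b x
  rw [lintegral_add_left (measurable_gaussianPDF b 1),
    lintegral_add_left (measurable_gaussianPDF a 1),
    lintegral_gaussianPDF_eq_one b one_ne_zero,
    lintegral_gaussianPDF_eq_one a one_ne_zero] at h
  exact (ENNReal.add_right_inj ENNReal.one_ne_top).1 h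

end aux

/-- If `0 < ε ≤ 1/2` and `α > 0` satisfies `2Φ(α) − 1 ≤ ε/(1−ε)`, then there
are probability measures `Q₁, Q₂` on `ℝ` such that the Huber `ε`-contaminations
`(1−ε)·N(−α,1) + ε·Q₁` and `(1−ε)·N(α,1) + ε·Q₂` coincide, and consequently every measurable
estimator `f : ℝⁿ → ℝ` fails to be within `α` of one of the two means with probability `> 1/2`
under i.i.d. samples from the common contamination. -/
theorem huber_gaussian_mean_lower_bound (ε α : ℝ) (hε0 : 0 < ε) (hε : ε ≤ 1 / 2) (hα : 0 < α)
    (htv : 2 * stdPhi α - 1 ≤ ε / (1 - ε)) :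
    ∃ Q₁ Q₂ : Measure ℝ, IsProbabilityMeasure Q₁ ∧ IsProbabilityMeasure Q₂ ∧
      ENNReal.ofReal (1 - ε) • gaussianReal (-α) 1 + ENNReal.ofReal ε • Q₁ =
        ENNReal.ofReal (1 - ε) • gaussianReal α 1 + ENNReal.ofReal ε • Q₂ ∧
      ∀ n : ℕ, 1 ≤ n → ∀ f : (Fin n → ℝ) → ℝ, Measurable f →
        (Measure.pi fun _ : Fin n =>
            ENNReal.ofReal (1 - ε) • gaussianReal (-α) 1 + ENNReal.ofReal ε • Q₁)
          {x | |f x - (-α)| < α} ≤ 1 / 2 ∨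
        (Measure.pi fun _ : Fin n =>
            ENNReal.ofReal (1 - ε) • gaussianReal (-α) 1 + ENNReal.ofReal ε • Q₁)
          {x | |f x - α| < α} ≤ 1 / 2 := by
  have hε1 : (0:ℝ) < 1 - ε := by linarith
  set H₁ : Measure ℝ := volume.withDensity
    (fun x => ENNReal.ofReal (max (gaussianPDFReal α 1 x - gaussianPDFReal (-α) 1 x) 0))
    with hH₁def
  set H₂ : Measure ℝ := volume.withDensity
    (fun x => ENNReal.ofReal (max (gaussianPDFReal (-α) 1 x - gaussianPDFReal α 1 x) 0))
    with hH₂def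
  set M : ℝ≥0∞ :=
    ∫⁻ x, ENNReal.ofReal (max (gaussianPDFReal α 1 x - gaussianPDFReal (-α) 1 x) 0) with hMdef
  set r : ℝ≥0∞ := ENNReal.ofReal ε - ENNReal.ofReal (1 - ε) * M with hrdef
  have hεne : ENNReal.ofReal ε ≠ 0 := (ENNReal.ofReal_pos.2 hε0).ne'
  have hεnt : ENNReal.ofReal ε ≠ ⊤ := ENNReal.ofReal_ne_top
  have hMle : ENNReal.ofReal (1 - ε) * M ≤ ENNReal.ofReal ε := by
    calc ENNReal.ofReal (1 - ε) * M
        ≤ ENNReal.ofReal (1 - ε) * ENNReal.ofReal (ε / (1 - ε)) := by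
          exact mul_le_mul_right (le_trans (M_le_ofReal hα) (ENNReal.ofReal_le_ofReal htv)) _
      _ = ENNReal.ofReal ((1 - ε) * (ε / (1 - ε))) := (ENNReal.ofReal_mul (by linarith)).symm
      _ = ENNReal.ofReal ε := by rw [mul_div_cancel₀ _ (ne_of_gt hε1)]
  have hH₁univ : H₁ Set.univ = M := by
    rw [hH₁def, withDensity_apply _ MeasurableSet.univ, Measure.restrict_univ, hMdef]
  have hH₂univ : H₂ Set.univ = M := by
    rw [hH₂def, withDensity_apply _ MeasurableSet.univ, Measure.restrict_univ, hMdef,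
      M_symm α (-α)]
  have hmass : ENNReal.ofReal (1 - ε) * M + r = ENNReal.ofReal ε :=
    add_tsub_cancel_of_le hMle
  refine ⟨(ENNReal.ofReal ε)⁻¹ • (ENNReal.ofReal (1 - ε) • H₁ + r • gaussianReal 0 1),
    (ENNReal.ofReal ε)⁻¹ • (ENNReal.ofReal (1 - ε) • H₂ + r • gaussianReal 0 1),
    ?_, ?_, ?_, ?_⟩
  case _ =>
    constructor
    simp only [Measure.smul_apply, Measure.add_apply, smul_eq_mul, hH₁univ, measure_univ,
      mul_one, hmass]
    exact ENNReal.inv_mul_cancel hεne hεnt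
  case _ =>
    constructor
    simp only [Measure.smul_apply, Measure.add_apply, smul_eq_mul, hH₂univ, measure_univ,
      mul_one, hmass]
    exact ENNReal.inv_mul_cancel hεne hεnt
  case _ =>
    have hcancel : ∀ X : Measure ℝ, ENNReal.ofReal ε • ((ENNReal.ofReal ε)⁻¹ • X) = X := by
      intro X
      rw [smul_smul, ENNReal.mul_inv_cancel hεne hεnt, one_smul]
    rw [hcancel, hcancel]
    have hcore : gaussianReal (-α) 1 + H₁ = gaussianReal α 1 + H₂ := by
      rw [gaussianReal_of_var_ne_zero (-α) one_ne_zero,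
        gaussianReal_of_var_ne_zero α one_ne_zero, hH₁def, hH₂def,
        ← withDensity_add_left (measurable_gaussianPDF (-α) 1),
        ← withDensity_add_left (measurable_gaussianPDF α 1)]
      congr 1
      funext x
      exact pt_key α (-α) x
    calc ENNReal.ofReal (1 - ε) • gaussianReal (-α) 1
          + (ENNReal.ofReal (1 - ε) • H₁ + r • gaussianReal 0 1)
        = ENNReal.ofReal (1 - ε) • (gaussianReal (-α) 1 + H₁) + r • gaussianReal 0 1 := by
          rw [smul_add]; abel
      _ = ENNReal.ofReal (1 - ε) • (gaussianReal α 1 + H₂) + r • gaussianReal 0 1 := by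
          rw [hcore]
      _ = ENNReal.ofReal (1 - ε) • gaussianReal α 1
          + (ENNReal.ofReal (1 - ε) • H₂ + r • gaussianReal 0 1) := by
          rw [smul_add]; abel
  case _ =>
    intro n hn f hf
    set Q₁ := (ENNReal.ofReal ε)⁻¹ • (ENNReal.ofReal (1 - ε) • H₁ + r • gaussianReal 0 1)
      with hQ₁def
    have hQ₁prob : IsProbabilityMeasure Q₁ := by
      constructor
      rw [hQ₁def]
      simp only [Measure.smul_apply, Measure.add_apply, smul_eq_mul, hH₁univ, measure_univ,
        mul_one, hmass]
      exact ENNReal.inv_mul_cancel hεne hεnt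
    set D : Measure ℝ := ENNReal.ofReal (1 - ε) • gaussianReal (-α) 1
      + ENNReal.ofReal ε • Q₁ with hDdef
    haveI hDprob : IsProbabilityMeasure D := by
      constructor
      rw [hDdef]
      simp only [Measure.add_apply, Measure.smul_apply, smul_eq_mul, measure_univ, mul_one]
      rw [← ENNReal.ofReal_add (by linarith) hε0.le]
      norm_num
    haveI : IsProbabilityMeasure (Measure.pi fun _ : Fin n => D) := by infer_instance
    by_contra hcon
    push_neg at hcon
    obtain ⟨h1, h2⟩ := hcon
    set P := Measure.pi fun _ : Fin n => D with hPdef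
    have hB : MeasurableSet {x : Fin n → ℝ | |f x - α| < α} :=
      measurableSet_lt ((hf.sub measurable_const).abs) measurable_const
    have hdisj : Disjoint {x : Fin n → ℝ | |f x - (-α)| < α} {x : Fin n → ℝ | |f x - α| < α} := by
      rw [Set.disjoint_left]
      intro x hx1 hx2
      simp only [Set.mem_setOf_eq, abs_lt] at hx1 hx2
      linarith [hx1.2, hx2.1]
    have hlt : (1:ℝ≥0∞) < 1 := by
      calc (1:ℝ≥0∞) = 1/2 + 1/2 := by rw [ENNReal.add_halves]
        _ < P {x | |f x - (-α)| < α} + P {x | |f x - α| < α} := ENNReal.add_lt_add h1 h2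
        _ = P ({x | |f x - (-α)| < α} ∪ {x | |f x - α| < α}) :=
            (measure_union hdisj hB).symm
        _ ≤ 1 := prob_le_one
    exact absurd hlt (lt_irrefl 1)
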